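/- Let α > 0, ε > 0 and c < t < 0. Let h_ε^{-1} : ℝ → ℝ denote the inverse of the strictly increasing bijection h_ε(γ) = γ·exp((γ² − α²)/(2ε)). Then there exists a unique constant D ∈ (t²/2, c²/2) such that ∫_c^t h_ε^{-1}(y²/2 − D) dy = 0. -/

import Mathlib

/-! The map `h γ = γ * exp ((γ ^ 2 - α ^ 2) / (2 * ε))` has derivative
`exp (…) * (1 + γ ^ 2 / ε) > 0` and `h 0 = 0`, so its inverse is continuous, strictly increasing
and sign-preserving. Hence `F D = ∫ y in c..t, h⁻¹ (y ^ 2 / 2 - D)` is continuous and strictly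
decreasing in `D`. On `(c, t)` we have `t ^ 2 < y ^ 2 < c ^ 2`, so the integrand is positive for
`D = t ^ 2 / 2` and negative for `D = c ^ 2 / 2`; the intermediate value theorem gives a zero of
`F` between them, and strict monotonicity makes it unique. -/

open Real Set MeasureTheory intervalIntegral

section RightInverse

variable {α β : Type*} [LinearOrder α] [LinearOrder β] {f : α → β} {g : β → α}

theorem StrictMono.strictMono_of_rightInverse (hf : StrictMono f)
    (hg : Function.RightInverse g f) : StrictMono g :=
  fun x y hxy => hf.lt_iff_lt.mp (by rwa [hg x, hg y])

theorem StrictMono.continuous_of_rightInverse [TopologicalSpace α] [OrderTopology α]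
    [DenselyOrdered α] [TopologicalSpace β] [OrderTopology β] (hf : StrictMono f)
    (hg : Function.RightInverse g f) : Continuous g :=
  (hf.strictMono_of_rightInverse hg).monotone.continuous_of_surjective
    (hg.leftInverse_of_injective hf.injective).surjective

end RightInverse

theorem hasDerivAt_mul_exp_sq_sub_div (α γ : ℝ) {ε : ℝ} (hε : ε ≠ 0) :
    HasDerivAt (fun x => x * exp ((x ^ 2 - α ^ 2) / (2 * ε)))
      (exp ((γ ^ 2 - α ^ 2) / (2 * ε)) * (1 + γ ^ 2 / ε)) γ := by
  have hexp := (((hasDerivAt_pow 2 γ).sub_const (α ^ 2)).div_const (2 * ε)).exp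
  refine ((hasDerivAt_id' γ).mul hexp).congr_deriv ?_
  field_simp
  ring

theorem strictMono_mul_exp_sq_sub_div (α : ℝ) {ε : ℝ} (hε : 0 < ε) :
    StrictMono fun x => x * exp ((x ^ 2 - α ^ 2) / (2 * ε)) :=
  strictMono_of_deriv_pos fun γ => by
    rw [(hasDerivAt_mul_exp_sq_sub_div α γ hε.ne').deriv]
    positivity

section ShiftedIntegral

variable {g f : ℝ → ℝ} {a b : ℝ}

theorem intervalIntegrable_comp_sub (hg : Continuous g) (hf : Continuous f) (D : ℝ) :
    IntervalIntegrable (fun y => g (f y - D)) volume a b :=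
  (hg.comp (hf.sub continuous_const)).intervalIntegrable a b

theorem continuous_intervalIntegral_comp_sub (hg : Continuous g) (hf : Continuous f) :
    Continuous fun D => ∫ y in a..b, g (f y - D) :=
  continuous_parametric_intervalIntegral_of_continuous' (f := fun D y => g (f y - D))
    (hg.comp ((hf.comp continuous_snd).sub continuous_fst)) a b

theorem strictAnti_intervalIntegral_comp_sub (hg : StrictMono g) (hgc : Continuous g)
    (hf : Continuous f) (hab : a < b) : StrictAnti fun D => ∫ y in a..b, g (f y - D) := by
  intro D₁ D₂ hD
  have hi := intervalIntegrable_comp_sub (a := a) (b := b) hgc hf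
  have hpos := intervalIntegral_pos_of_pos ((hi D₁).sub (hi D₂))
    (fun y => sub_pos.2 (hg (by linarith))) hab
  rw [integral_sub (hi D₁) (hi D₂)] at hpos
  exact sub_pos.1 hpos

theorem intervalIntegral_comp_sub_pos (hg : StrictMono g) (hg0 : g 0 = 0) (hgc : Continuous g)
    (hf : Continuous f) (hab : a < b) {D : ℝ} (hD : ∀ y ∈ Ioo a b, D < f y) :
    0 < ∫ y in a..b, g (f y - D) :=
  intervalIntegral_pos_of_pos_on (intervalIntegrable_comp_sub hgc hf D)
    (fun y hy => hg0 ▸ hg (sub_pos.2 (hD y hy))) hab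

theorem intervalIntegral_comp_sub_neg (hg : StrictMono g) (hg0 : g 0 = 0) (hgc : Continuous g)
    (hf : Continuous f) (hab : a < b) {D : ℝ} (hD : ∀ y ∈ Ioo a b, f y < D) :
    ∫ y in a..b, g (f y - D) < 0 := by
  have hpos : 0 < ∫ y in a..b, -g (f y - D) :=
    intervalIntegral_pos_of_pos_on (intervalIntegrable_comp_sub hgc hf D).neg
    (fun y hy => neg_pos.2 (hg0 ▸ hg (sub_neg.2 (hD y hy)))) hab
  rw [intervalIntegral.integral_neg] at hpos
  exact neg_pos.1 hpos

theorem existsUnique_intervalIntegral_comp_sub_eq_zero (hg : StrictMono g) (hg0 : g 0 = 0)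
    (hgc : Continuous g) (hf : Continuous f) (hab : a < b) {D₁ D₂ : ℝ}
    (hD₁ : ∀ y ∈ Ioo a b, D₁ < f y) (hD₂ : ∀ y ∈ Ioo a b, f y < D₂) :
    ∃! D, D ∈ Ioo D₁ D₂ ∧ ∫ y in a..b, g (f y - D) = 0 := by
  have hmid : (a + b) / 2 ∈ Ioo a b := ⟨by linarith, by linarith⟩
  obtain ⟨D, hD, hzero⟩ := intermediate_value_Ioo' ((hD₁ _ hmid).trans (hD₂ _ hmid)).le
    (continuous_intervalIntegral_comp_sub hgc hf).continuousOn
    ⟨intervalIntegral_comp_sub_neg hg hg0 hgc hf hab hD₂,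
      intervalIntegral_comp_sub_pos hg hg0 hgc hf hab hD₁⟩
  exact ⟨D, ⟨hD, hzero⟩, fun D' hD' =>
    (strictAnti_intervalIntegral_comp_sub hg hgc hf hab).injective (hD'.2.trans hzero.symm)⟩

end ShiftedIntegral

theorem stmt_16_general (α ε c t : ℝ) (hε : 0 < ε) (hct : c < t) (ht : t < 0)
    (h hinv : ℝ → ℝ)
    (hh : ∀ γ : ℝ, h γ = γ * Real.exp ((γ ^ 2 - α ^ 2) / (2 * ε)))
    (hinv_right : Function.RightInverse hinv h) :
    ∃! D : ℝ, D ∈ Set.Ioo (t ^ 2 / 2) (c ^ 2 / 2) ∧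
      (∫ y in c..t, hinv (y ^ 2 / 2 - D)) = 0 := by
  have h_mono : StrictMono h := by
    simpa only [← funext hh] using strictMono_mul_exp_sq_sub_div α hε
  have hinv_zero : hinv 0 = 0 := h_mono.injective (by rw [hinv_right 0, hh]; ring)
  refine existsUnique_intervalIntegral_comp_sub_eq_zero
    (h_mono.strictMono_of_rightInverse hinv_right) hinv_zero
    (h_mono.continuous_of_rightInverse hinv_right) (by fun_prop) hct ?_ ?_
  · intro y ⟨_, hyt⟩
    nlinarith
  · intro y ⟨hcy, _⟩
    nlinarith

theorem stmt_16 (α ε c t : ℝ) (hα : 0 < α) (hε : 0 < ε) (hct : c < t) (ht : t < 0)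
    (h hinv : ℝ → ℝ)
    (hh : ∀ γ : ℝ, h γ = γ * Real.exp ((γ ^ 2 - α ^ 2) / (2 * ε)))
    (hinv_left : Function.LeftInverse hinv h)
    (hinv_right : Function.RightInverse hinv h) :
    ∃! D : ℝ, D ∈ Set.Ioo (t ^ 2 / 2) (c ^ 2 / 2) ∧
      (∫ y in c..t, hinv (y ^ 2 / 2 - D)) = 0 :=
  stmt_16_general α ε c t hε hct ht h hinv hh hinv_right
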